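/- arXiv:2012.02020 — 3 statements merged into one kernel-verified Lean document; each statement's English description precedes it below -/
import Mathlib

section
/- Let A ∈ ℝ^{n×n}, B ∈ ℝ^{n×m}, C ∈ ℝ^{m×n}. For i = 1,…,m let dᵢ = min{j : Cᵢ Aʲ B ≠ 0} (or n−1 if no such j ≤ n−1 exists), and let B* be the m×m matrix whose i-th row is Cᵢ A^{dᵢ} B. If B* is invertible, then with Φ = −B*⁻¹ A* and Γ = B*⁻¹, where A* has i-th row Cᵢ A^{dᵢ+1}, the closed-loop system x(t+1) = (A + BΦ)x(t) + BΓ v(t), y(t) = C x(t) satisfies yᵢ(t + dᵢ + 1) = vᵢ(t) for all t ≥ 0 when initialized at x(0) = 0. -/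
/-!
Along the closed loop, a row vector `w` with `w B = 0` sees no input, so `w x(t+1) = (w A) x(t)`.
Since `Cᵢ Aʲ B = 0` for `j < dᵢ`, iterating gives `yᵢ(t + dᵢ + 1) = Cᵢ A^{dᵢ} x(t+1)`. One more step
brings in the input through the row `Cᵢ A^{dᵢ} B = B*ᵢ`, and `B* (Φ x + Γ v) = v − A* x` cancels the
free term `Cᵢ A^{dᵢ+1} x = A*ᵢ x`, leaving `vᵢ(t)`.
-/

open Matrix

namespace Matrix

variable {R ι κ μ : Type*} [CommRing R] [Fintype ι] [Fintype κ] [Fintype μ]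

theorem dotProduct_closedLoop (A : Matrix ι ι R) (B : Matrix ι κ R) (Φ : Matrix κ ι R)
    (Γ : Matrix κ μ R) (w z : ι → R) (u : μ → R) :
    w ⬝ᵥ ((A + B * Φ) *ᵥ z + (B * Γ) *ᵥ u) = (w ᵥ* A) ⬝ᵥ z + (w ᵥ* B) ⬝ᵥ (Φ *ᵥ z + Γ *ᵥ u) := by
  simp only [add_mulVec, ← mulVec_mulVec, dotProduct_add, dotProduct_mulVec]
  ring

section ClosedLoop

variable {A : Matrix ι ι R} {B : Matrix ι κ R} {Φ : Matrix κ ι R}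
  {Γ : Matrix κ μ R} {x : ℕ → ι → R} {v : ℕ → μ → R}

theorem dotProduct_succ_of_vecMul_eq_zero
    (hx : ∀ t, x (t + 1) = (A + B * Φ) *ᵥ x t + (B * Γ) *ᵥ v t)
    {w : ι → R} (hw : w ᵥ* B = 0) (t : ℕ) :
    w ⬝ᵥ x (t + 1) = (w ᵥ* A) ⬝ᵥ x t := by
  rw [hx, dotProduct_closedLoop, hw, zero_dotProduct, add_zero]

theorem dotProduct_add_of_vecMul_pow_mul_eq_zero [DecidableEq ι]
    (hx : ∀ t, x (t + 1) = (A + B * Φ) *ᵥ x t + (B * Γ) *ᵥ v t)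
    {c : ι → R} {k : ℕ} (hc : ∀ j < k, c ᵥ* (A ^ j * B) = 0) (t : ℕ) :
    c ⬝ᵥ x (t + k) = (c ᵥ* A ^ k) ⬝ᵥ x t := by
  induction k generalizing t with
  | zero => simp
  | succ k ih =>
    rw [← add_assoc, add_right_comm, ih (fun j hj => hc j (by omega)),
      dotProduct_succ_of_vecMul_eq_zero hx (by rw [vecMul_vecMul, hc k k.lt_succ_self]),
      vecMul_vecMul, ← pow_succ]

end ClosedLoop

theorem mulVec_decouplingInput [DecidableEq κ] {Bstar : Matrix κ κ R} (hB : IsUnit Bstar.det)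
    (Astar : Matrix κ ι R) (z : ι → R) (u : κ → R) :
    Bstar *ᵥ ((-(Bstar⁻¹ * Astar)) *ᵥ z + Bstar⁻¹ *ᵥ u) = u - Astar *ᵥ z := by
  rw [mulVec_add, mulVec_mulVec, mulVec_mulVec, Matrix.mul_neg, ← Matrix.mul_assoc,
    mul_nonsing_inv _ hB, Matrix.one_mul, one_mulVec, neg_mulVec, neg_add_eq_sub]

end Matrix

theorem stmt_15_general {n m : ℕ}
    (A : Matrix (Fin n) (Fin n) ℝ) (B : Matrix (Fin n) (Fin m) ℝ)
    (C : Matrix (Fin m) (Fin n) ℝ)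
    (d : Fin m → ℕ)
    (hd : ∀ i, (Matrix.vecMul (C i) (A ^ d i * B) ≠ 0 ∧
        ∀ j < d i, Matrix.vecMul (C i) (A ^ j * B) = 0) ∨
      (d i = n - 1 ∧ ∀ j ≤ n - 1, Matrix.vecMul (C i) (A ^ j * B) = 0))
    (Bstar : Matrix (Fin m) (Fin m) ℝ) (Astar : Matrix (Fin m) (Fin n) ℝ)
    (hBstar : ∀ i, Bstar i = Matrix.vecMul (C i) (A ^ d i * B))
    (hAstar : Astar = Matrix.of fun i j => Matrix.vecMul (C i) (A ^ (d i + 1)) j)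
    (hB : IsUnit Bstar.det)
    (Φ : Matrix (Fin m) (Fin n) ℝ) (Γ : Matrix (Fin m) (Fin m) ℝ)
    (hΦ : Φ = -(Bstar⁻¹ * Astar)) (hΓ : Γ = Bstar⁻¹)
    (v : ℕ → Fin m → ℝ) (x : ℕ → Fin n → ℝ) (y : ℕ → Fin m → ℝ)
    (hx : ∀ t, x (t + 1) = (A + B * Φ).mulVec (x t) + (B * Γ).mulVec (v t))
    (hy : ∀ t, y t = C.mulVec (x t)) :
    ∀ i t, y (t + d i + 1) i = v t i := by
  intro i t
  have hzero : ∀ j < d i, C i ᵥ* (A ^ j * B) = 0 := by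
    rcases hd i with ⟨-, h⟩ | ⟨hdi, h⟩
    · exact h
    · exact fun j hj => h j (hdi ▸ hj.le)
  have hfeedback := congrFun (mulVec_decouplingInput hB Astar (x t) (v t)) i
  rw [← hΦ, ← hΓ] at hfeedback
  calc y (t + d i + 1) i = (C i ᵥ* A ^ d i) ⬝ᵥ x (t + 1) := by
        rw [hy, add_right_comm, mulVec, dotProduct_add_of_vecMul_pow_mul_eq_zero hx hzero]
    _ = Astar i ⬝ᵥ x t + (Bstar *ᵥ (Φ *ᵥ x t + Γ *ᵥ v t)) i := by
        rw [hx, dotProduct_closedLoop, vecMul_vecMul, vecMul_vecMul, ← pow_succ, ← hBstar,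
          hAstar]
        rfl
    _ = v t i := by
        rw [hfeedback, Pi.sub_apply]
        exact add_sub_cancel (Astar i ⬝ᵥ x t) (v t i)

theorem stmt_15 {n m : ℕ}
    (A : Matrix (Fin n) (Fin n) ℝ) (B : Matrix (Fin n) (Fin m) ℝ)
    (C : Matrix (Fin m) (Fin n) ℝ)
    (d : Fin m → ℕ)
    (hd : ∀ i, (Matrix.vecMul (C i) (A ^ d i * B) ≠ 0 ∧
        ∀ j < d i, Matrix.vecMul (C i) (A ^ j * B) = 0) ∨
      (d i = n - 1 ∧ ∀ j ≤ n - 1, Matrix.vecMul (C i) (A ^ j * B) = 0))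
    (Bstar : Matrix (Fin m) (Fin m) ℝ) (Astar : Matrix (Fin m) (Fin n) ℝ)
    (hBstar : ∀ i, Bstar i = Matrix.vecMul (C i) (A ^ d i * B))
    (hAstar : Astar = Matrix.of fun i j => Matrix.vecMul (C i) (A ^ (d i + 1)) j)
    (hB : IsUnit Bstar.det)
    (Φ : Matrix (Fin m) (Fin n) ℝ) (Γ : Matrix (Fin m) (Fin m) ℝ)
    (hΦ : Φ = -(Bstar⁻¹ * Astar)) (hΓ : Γ = Bstar⁻¹)
    (v : ℕ → Fin m → ℝ) (x : ℕ → Fin n → ℝ) (y : ℕ → Fin m → ℝ)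
    (hx0 : x 0 = 0)
    (hx : ∀ t, x (t + 1) = (A + B * Φ).mulVec (x t) + (B * Γ).mulVec (v t))
    (hy : ∀ t, y t = C.mulVec (x t)) :
    ∀ i t, y (t + d i + 1) i = v t i :=
  stmt_15_general A B C d hd Bstar Astar hBstar hAstar hB Φ Γ hΦ hΓ v x y hx hy
end

section
/- Let f : ℕ → Matrix (Fin m) (Fin m) ℝ with ‖f‖_{L₁} := max_i ∑_j ∑_τ |f_{ij}(τ)| < 1. Consider any sequences v, r', w : ℕ → ℝ^m satisfying, for all t: (i) ‖v(t)‖_∞ ≤ M + sup_{s ≤ t} ‖r'(s)‖_∞ for some constant M ≥ 0, and (ii) w(t) = ∑_{τ=0}^{t} f(τ) v(t−τ), and (iii) r'(t) = g(t) − w(t) where g is a bounded sequence. Then v is bounded: sup_t ‖v(t)‖_∞ < ∞. -/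
/-!
Let `N` be the largest sup-norm of `v s` over the window `s ≤ t`. Over that window the
convolution gives `‖w s‖∞ ≤ γ N` with `γ = ‖f‖_{L₁}`, hence `‖r' s‖∞ ≤ G + γ N`, and the gain
condition turns this into `N ≤ M + G + γ N`. Since `γ < 1`, `N ≤ (M + G) / (1 - γ)`, a bound
independent of `t`.
-/

open Finset Matrix

lemma abs_mulVec_apply_le {ι κ : Type*} [Fintype κ] (A : Matrix ι κ ℝ) {x : κ → ℝ} {N : ℝ}
    (hx : ∀ k, |x k| ≤ N) (i : ι) : |(A *ᵥ x) i| ≤ (∑ k, |A i k|) * N :=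
  calc |(A *ᵥ x) i| = |∑ k, A i k * x k| := rfl
    _ ≤ ∑ k, |A i k| * |x k| := by simpa only [abs_mul] using abs_sum_le_sum_abs (fun k => A i k * x k) univ
    _ ≤ ∑ k, |A i k| * N := by gcongr with k; exact hx k
    _ = (∑ k, |A i k|) * N := (sum_mul ..).symm

lemma abs_causal_conv_apply_le {ι κ : Type*} [Fintype κ] (f : ℕ → Matrix ι κ ℝ)
    (hf : ∀ i k, Summable fun τ => |f τ i k|) {v : ℕ → κ → ℝ} {t : ℕ} {N : ℝ} (hN : 0 ≤ N)
    (hv : ∀ s ≤ t, ∀ k, |v s k| ≤ N) (i : ι) :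
    |(∑ τ ∈ range (t + 1), f τ *ᵥ v (t - τ)) i| ≤ (∑ k, ∑' τ, |f τ i k|) * N :=
  calc |(∑ τ ∈ range (t + 1), f τ *ᵥ v (t - τ)) i|
      ≤ ∑ τ ∈ range (t + 1), |(f τ *ᵥ v (t - τ)) i| := by
        rw [Finset.sum_apply]; exact abs_sum_le_sum_abs _ _
    _ ≤ ∑ τ ∈ range (t + 1), (∑ k, |f τ i k|) * N := by
        gcongr with τ; exact abs_mulVec_apply_le _ (hv _ (t.sub_le τ)) i
    _ = (∑ k, ∑ τ ∈ range (t + 1), |f τ i k|) * N := by rw [← sum_mul, sum_comm]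
    _ ≤ (∑ k, ∑' τ, |f τ i k|) * N := by
        gcongr with k; exact (hf i k).sum_le_tsum _ fun τ _ => abs_nonneg _

lemma sSup_abs_le_of_forall_le {ι : Type*} [Nonempty ι] {u : ℕ → ι → ℝ} {t : ℕ} {B : ℝ}
    (h : ∀ s ≤ t, ∀ j, |u s j| ≤ B) : sSup {x : ℝ | ∃ s ≤ t, ∃ j, x = |u s j|} ≤ B :=
  csSup_le ⟨_, 0, t.zero_le, Classical.arbitrary ι, rfl⟩ <| by
    rintro _ ⟨s, hs, j, rfl⟩
    exact h s hs j

theorem stmt_17_general {m : ℕ} (f : ℕ → Matrix (Fin m) (Fin m) ℝ)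
    (hf : ∀ i j, Summable (fun τ => |f τ i j|))
    (hL1 : (⨆ i, ∑ j, ∑' τ, |f τ i j|) < 1)
    (v r' w g : ℕ → Fin m → ℝ) (M : ℝ)
    (hgain : ∀ t i, |v t i| ≤ M + sSup {x : ℝ | ∃ s ≤ t, ∃ j, x = |r' s j|})
    (hw : ∀ t, w t = ∑ τ ∈ Finset.range (t + 1), (f τ).mulVec (v (t - τ)))
    (hr' : ∀ t, r' t = g t - w t)
    (hg : ∃ G : ℝ, ∀ t i, |g t i| ≤ G) :
    ∃ M' : ℝ, ∀ t i, |v t i| ≤ M' := by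
  obtain ⟨G, hG⟩ := hg
  set γ := ⨆ i, ∑ j, ∑' τ, |f τ i j|
  have hrow : ∀ i, ∑ j, ∑' τ, |f τ i j| ≤ γ := le_ciSup (Set.finite_range _).bddAbove
  refine ⟨(M + G) / (1 - γ), fun t i => ?_⟩
  have : Nonempty (Fin m) := ⟨i⟩
  set N := (range (t + 1)).sup' nonempty_range_add_one (‖v ·‖)
  have hvN : ∀ s ≤ t, ∀ k, |v s k| ≤ N := fun s hs k =>
    (norm_le_pi_norm (v s) k).trans (le_sup' (‖v ·‖) (mem_range_succ_iff.2 hs))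
  have hN : 0 ≤ N := (norm_nonneg _).trans (le_sup' (‖v ·‖) (self_mem_range_succ t))
  have hwN : ∀ s ≤ t, ∀ j, |w s j| ≤ γ * N := fun s hs j => by
    rw [hw]
    exact (abs_causal_conv_apply_le f hf hN (fun s' hs' => hvN s' (hs'.trans hs)) j).trans
      (mul_le_mul_of_nonneg_right (hrow j) hN)
  have hr'N : ∀ s ≤ t, ∀ j, |r' s j| ≤ G + γ * N := fun s hs j => by
    rw [hr', Pi.sub_apply]
    exact (abs_sub _ _).trans (add_le_add (hG s j) (hwN s hs j))
  have hN_gain : N ≤ M + G + γ * N := sup'_le _ _ fun s hs =>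
    (pi_norm_le_iff_of_nonempty _).2 fun k => by
      have := (hgain s k).trans (add_le_add_right
        (sSup_abs_le_of_forall_le fun s' hs' => hr'N s' (hs'.trans (mem_range_succ_iff.1 hs))) M)
      rw [Real.norm_eq_abs]
      linarith
  have hN_le : N ≤ (M + G) / (1 - γ) := by
    rw [le_div_iff₀ (by linarith)]
    linarith
  exact (hvN t le_rfl i).trans hN_le

theorem stmt_17 {m : ℕ} (f : ℕ → Matrix (Fin m) (Fin m) ℝ)
    (hf : ∀ i j, Summable (fun τ => |f τ i j|))
    (hL1 : (⨆ i, ∑ j, ∑' τ, |f τ i j|) < 1)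
    (v r' w g : ℕ → Fin m → ℝ) (M : ℝ) (hM : 0 ≤ M)
    (hgain : ∀ t i, |v t i| ≤ M + sSup {x : ℝ | ∃ s ≤ t, ∃ j, x = |r' s j|})
    (hw : ∀ t, w t = ∑ τ ∈ Finset.range (t + 1), (f τ).mulVec (v (t - τ)))
    (hr' : ∀ t, r' t = g t - w t)
    (hg : ∃ G : ℝ, ∀ t i, |g t i| ≤ G) :
    ∃ M' : ℝ, ∀ t i, |v t i| ≤ M' :=
  stmt_17_general f hf hL1 v r' w g M hgain hw hr' hg
end

section
/- Let Y ⊆ ℝ^p, W ⊆ ℝ^d be sets, with Pontryagin subtraction Y ∼ U := {z : z + u ∈ Y for all u ∈ U}. Let A ∈ ℝ^{n×n}, B_w ∈ ℝ^{n×d}, C ∈ ℝ^{p×n}, D_w ∈ ℝ^{p×d}. Define Y₀ := Y ∼ D_w W and Y_{t+1} := Y_t ∼ C Aᵗ B_w W (where M W denotes the image set). Then for any x₀, u-forced trajectory term h(t) ∈ ℝ^p, and any disturbance sequence w(0),…,w(t) ∈ W, the condition h(t) ∈ Y_t implies h(t) + C ∑_{j=0}^{t−1} A^{t−j−1} B_w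 w(j) + D_w w(t) ∈ Y. -/
/-! Membership in `Y_{t+1} = Y_t ∼ U_t` lets one add any element of `U_t` and land in `Y_t`.
The disturbance term with `w j` lies in `U_{t-j-1}`, so adding the terms for `j = 0, 1, …, t-1`
in turn walks `h` down through `Y_{t-1}, …, Y_0`, and `Y_0 = Y ∼ D_w W` absorbs `D_w w(t)`. -/

/-- Pontryagin (Minkowski) set subtraction. -/
def psub {α : Type*} [Add α] (V U : Set α) : Set α :=
  {z | ∀ u ∈ U, z + u ∈ V}

open Finset

theorem add_sum_mem_of_mem_iterated_psub {α : Type*} [AddCommMonoid α]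
    {Ys U : ℕ → Set α} (hYs : ∀ t, Ys (t + 1) = psub (Ys t) (U t)) :
    ∀ (t : ℕ) (z : α) (u : ℕ → α), z ∈ Ys t → (∀ j < t, u j ∈ U (t - j - 1)) →
      z + ∑ j ∈ range t, u j ∈ Ys 0 := by
  intro t
  induction t with
  | zero => simp
  | succ t ih =>
    intro z u hz hu
    rw [hYs] at hz
    have hfirst : z + u 0 ∈ Ys t := hz _ (by simpa using hu 0 t.succ_pos)
    have hrest := ih (z + u 0) (fun j => u (j + 1)) hfirst fun j hj => by
      simpa [Nat.add_sub_add_right] using hu (j + 1) (by omega)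
    rwa [sum_range_succ', add_comm _ (u 0), ← add_assoc]

theorem stmt_18 {n p d : ℕ}
    (A : Matrix (Fin n) (Fin n) ℝ) (Bw : Matrix (Fin n) (Fin d) ℝ)
    (C : Matrix (Fin p) (Fin n) ℝ) (Dw : Matrix (Fin p) (Fin d) ℝ)
    (Y : Set (Fin p → ℝ)) (W : Set (Fin d → ℝ))
    (Ys : ℕ → Set (Fin p → ℝ))
    (hY0 : Ys 0 = psub Y ((fun w => Dw.mulVec w) '' W))
    (hYs : ∀ t, Ys (t + 1) = psub (Ys t) ((fun w => (C * A ^ t * Bw).mulVec w) '' W)) :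
    ∀ (t : ℕ) (h : Fin p → ℝ) (w : ℕ → Fin d → ℝ),
      (∀ j, w j ∈ W) → h ∈ Ys t →
      h + C.mulVec (∑ j ∈ Finset.range t, (A ^ (t - j - 1) * Bw).mulVec (w j)) +
        Dw.mulVec (w t) ∈ Y := by
  intro t h w hw hh
  have houtput : C.mulVec (∑ j ∈ range t, (A ^ (t - j - 1) * Bw).mulVec (w j)) =
      ∑ j ∈ range t, (C * A ^ (t - j - 1) * Bw).mulVec (w j) := by
    simp only [Matrix.mulVec_sum, Matrix.mulVec_mulVec, Matrix.mul_assoc]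
  have hnominal := add_sum_mem_of_mem_iterated_psub hYs t h _ hh
    fun j _ => ⟨w j, hw j, rfl⟩
  rw [hY0] at hnominal
  rw [houtput]
  exact hnominal _ ⟨w t, hw t, rfl⟩
end
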